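/- Let (X,κ) be a Lefschetz complex over a ring R with unity, with face order ≤_κ. If 𝒱 is a multivector field on X, then the map θ : X → X, θ(x) := x★, satisfies: (i) x ∈ cl θ(x) for each x ∈ X; (ii) θ∘θ = θ; (iii) for each y ∈ im θ, if x ∈ θ⁻¹(y) then opn x ∩ cl y ⊆ θ⁻¹(y). Conversely, if θ : X → X satisfies (i)–(iii), then 𝒱_θ := {θ⁻¹(y) : y ∈ im θ} is a multivector field on X. -/
import Mathlib


open scoped Classical

namespace CMVF

variable {R : Type*} [Ring R] {X : Type*} [Fintype X]

/-- A Lefschetz complex over `R` with cells `X`. -/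
structure Lefschetz (R : Type*) [Ring R] (X : Type*) [Fintype X] where
  dim : X → ℕ
  κ : X → X → R
  dim_facet : ∀ x y, κ x y ≠ 0 → dim x = dim y + 1
  κ_sq : ∀ x z, (∑ y : X, κ x y * κ y z) = 0

namespace Lefschetz

variable (L : Lefschetz R X)

/-- The face order `y ≤κ x` : the partial order generated by the facet relation. -/
def le (y x : X) : Prop := Relation.ReflTransGen (fun a b => L.κ b a ≠ 0) y x

/-- Closure of a set of cells: all faces of cells of `A`. -/
def cls (A : Set X) : Set X := {z | ∃ a ∈ A, L.le z a}

/-- Closure of a single cell. -/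
def clPt (x : X) : Set X := L.cls {x}

/-- The minimal open set containing `x`. -/
def opn (x : X) : Set X := {z | L.le x z}

/-- `A` is closed. -/
def Closed (A : Set X) : Prop := L.cls A = A

/-- The mouth of `A`. -/
def mo (A : Set X) : Set X := L.cls A \ A

/-- `A` is proper: its mouth is closed. -/
def Proper (A : Set X) : Prop := L.Closed (L.mo A)

/-- Relative closure within an ambient subcomplex `W`. -/
def clsIn (W A : Set X) : Set X := L.cls A ∩ W

/-- Relative mouth within an ambient subcomplex `W`. -/
def moIn (W A : Set X) : Set X := L.clsIn W A \ A

/-- The boundary operator of the subcomplex determined by `A`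
(`∂ x = ∑ y ∈ A, κ x y • y` for `x ∈ A`). -/
noncomputable def bd (A : Set X) : (X → R) →ₗ[R] (X → R) where
  toFun f := fun y => if y ∈ A then ∑ x : X, (if x ∈ A then f x * L.κ x y else 0) else 0
  map_add' f g := by
    funext y
    by_cases hy : y ∈ A
    · simp only [hy, if_true, Pi.add_apply]
      rw [← Finset.sum_add_distrib]
      refine Finset.sum_congr rfl fun x _ => ?_
      by_cases hx : x ∈ A <;> simp [hx, add_mul]
    · simp [hy]
  map_smul' r f := by
    funext y
    by_cases hy : y ∈ A
    · simp only [hy, if_true, Pi.smul_apply, smul_eq_mul, RingHom.id_apply]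
      rw [Finset.mul_sum]
      refine Finset.sum_congr rfl fun x _ => ?_
      by_cases hx : x ∈ A <;> simp [hx, mul_assoc]
    · simp [hy]

/-- The `n`-chains of the subcomplex determined by `A`. -/
noncomputable def chainGroup (A : Set X) (n : ℕ) : Submodule R (X → R) :=
  Submodule.span R {f | ∃ x ∈ A, L.dim x = n ∧ f = Pi.single x 1}

/-- The `n`-cycles of the subcomplex determined by `A`. -/
noncomputable def cycles (A : Set X) (n : ℕ) : Submodule R (X → R) :=
  L.chainGroup A n ⊓ LinearMap.ker (L.bd A)

/-- The `n`-boundaries of the subcomplex determined by `A`. -/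
noncomputable def boundaries (A : Set X) (n : ℕ) : Submodule R (X → R) :=
  (L.chainGroup A (n + 1)).map (L.bd A)

/-- The Lefschetz homology `H^κ_n(A)` of the subcomplex determined by `A`. -/
noncomputable def homology (A : Set X) (n : ℕ) : Type _ :=
  (L.cycles A n) ⧸ ((L.boundaries A n).comap (L.cycles A n).subtype)

noncomputable instance homologyAddCommGroup (A : Set X) (n : ℕ) :
    AddCommGroup (L.homology A n) :=
  inferInstanceAs (AddCommGroup
    ((L.cycles A n) ⧸ ((L.boundaries A n).comap (L.cycles A n).subtype)))

noncomputable instance homologyModule (A : Set X) (n : ℕ) :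
    Module R (L.homology A n) :=
  inferInstanceAs (Module R
    ((L.cycles A n) ⧸ ((L.boundaries A n).comap (L.cycles A n).subtype)))

/-- `A` is a zero space: its Lefschetz homology vanishes. -/
def HomologyZero (A : Set X) : Prop := ∀ n, Subsingleton (L.homology A n)

/-- The Poincaré polynomial `p_A(t) = ∑ rank H^κ_n(A) tⁿ`. -/
noncomputable def poincare (A : Set X) : Polynomial ℕ :=
  ∑ n ∈ Finset.image L.dim Finset.univ,
    Polynomial.C (Module.finrank R (L.homology A n)) * Polynomial.X ^ n

/-- `V` is a multivector: proper, with a unique maximal element. -/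
def IsMV (V : Set X) : Prop :=
  L.Proper V ∧ ∃! m, m ∈ V ∧ ∀ x ∈ V, L.le x m

/-- A regular multivector: one with vanishing Lefschetz homology. -/
def Regular (V : Set X) : Prop := L.HomologyZero V

end Lefschetz

/-- A combinatorial multivector field on a Lefschetz complex: a partition into multivectors. -/
structure MVField {R : Type*} [Ring R] {X : Type*} [Fintype X] (L : Lefschetz R X) where
  mvs : Set (Set X)
  isMV : ∀ V ∈ mvs, L.IsMV V
  cover : ∀ x : X, ∃! V, V ∈ mvs ∧ x ∈ V

namespace MVField

variable {L : Lefschetz R X} (F : MVField L)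

/-- `[x]` : the multivector containing `x`. -/
noncomputable def mclass (x : X) : Set X := (F.cover x).exists.choose

lemma mclass_spec (x : X) : F.mclass x ∈ F.mvs ∧ x ∈ F.mclass x :=
  (F.cover x).exists.choose_spec

/-- `x★` : the dominant cell of the multivector containing `x`. -/
noncomputable def star (x : X) : X :=
  ((F.isMV _ (F.mclass_spec x).1).2).exists.choose

/-- `[x]°` : the regular part of the multivector of `x`. -/
noncomputable def regPart (x : X) : Set X :=
  if L.Regular (F.mclass x) then F.mclass x else F.mclass x \ {F.star x}

/-- The multivalued map `Π_𝒱`. -/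
noncomputable def Pi (x : X) : Set X :=
  if x = F.star x then L.clPt x \ F.regPart x else {F.star x}

/-- The multivalued map of the multivector field restricted to the subcomplex `W`. -/
noncomputable def PiIn (W : Set X) (x : X) : Set X := F.Pi x ∩ W

/-- `φ : ℤ → X` is a full solution of the multivector field restricted to `W`. -/
def IsSolIn (W : Set X) (φ : ℤ → X) : Prop := ∀ i, φ (i + 1) ∈ F.PiIn W (φ i)

/-- There is a full solution (of the field restricted to `W`) through `x` with values in `A`. -/
def FullSolThroughIn (W : Set X) (x : X) (A : Set X) : Prop :=
  ∃ φ : ℤ → X, F.IsSolIn W φ ∧ (∃ i, φ i = x) ∧ ∀ i, φ i ∈ A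

/-- `A` is `𝒱`-compatible. -/
def Compat (A : Set X) : Prop := ∀ x ∈ A, F.mclass x ⊆ A

/-- `[A]⁻` : the maximal `𝒱`-compatible subset of `A`. -/
def lowerC (A : Set X) : Set X := {x ∈ A | F.mclass x ⊆ A}

/-- `[A]⁺` : the minimal `𝒱`-compatible superset of `A`. -/
def upperC (A : Set X) : Set X := ⋃ x ∈ A, F.mclass x

/-- `Inv A`, the invariant part of `A`, computed in the subcomplex `W`. -/
def InvPartIn (W A : Set X) : Set X :=
  {x ∈ A | F.FullSolThroughIn W (F.star x) (F.lowerC A)}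

/-- `A` is invariant (within the subcomplex `W`). -/
def InvariantIn (W A : Set X) : Prop := F.InvPartIn W A = A

/-- `φ` is a path (solution) on the integer interval `[a,b]`, within the subcomplex `W`. -/
def IsPathOnIn (W : Set X) (a b : ℤ) (φ : ℤ → X) : Prop :=
  ∀ i, a ≤ i → i < b → φ (i + 1) ∈ F.PiIn W (φ i)

/-- `S` admits an internal tangency within the subcomplex `W`. -/
def HasInternalTangencyIn (W S : Set X) : Prop :=
  ∃ (a b : ℤ) (φ : ℤ → X), a ≤ b ∧ F.IsPathOnIn W a b φ ∧
    (∀ i, a ≤ i → i ≤ b → φ i ∈ L.clsIn W S) ∧ φ a ∈ S ∧ φ b ∈ S ∧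
    ∃ i, a ≤ i ∧ i ≤ b ∧ φ i ∈ L.moIn W S

/-- `S` is an isolated invariant set within the subcomplex `W`. -/
def IsoInvIn (W S : Set X) : Prop :=
  F.InvariantIn W S ∧ ¬ F.HasInternalTangencyIn W S

/-- `N` is a trapping region within the subcomplex `W`. -/
def TrappingIn (W N : Set X) : Prop :=
  N ⊆ W ∧ F.Compat N ∧ ∀ x ∈ N, F.PiIn W x ⊆ N

/-- `N` is a backward trapping region within the subcomplex `W`. -/
def BackTrappingIn (W N : Set X) : Prop :=
  N ⊆ W ∧ F.Compat N ∧ ∀ x ∈ W, ∀ y ∈ F.PiIn W x, y ∈ N → x ∈ N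

/-- `A` is an attractor within the subcomplex `W`. -/
def AttractorIn (W A : Set X) : Prop :=
  ∃ N, F.TrappingIn W N ∧ A = F.InvPartIn W N

/-- `A` is a repeller within the subcomplex `W`. -/
def RepellerIn (W A : Set X) : Prop :=
  ∃ N, F.BackTrappingIn W N ∧ A = F.InvPartIn W N

/-- The α-limit set of a full solution `φ`. -/
def alphaIn (W : Set X) (φ : ℤ → X) : Set X :=
  ⋂ k : ℕ, F.InvPartIn W (F.upperC (φ '' {i : ℤ | i ≤ -(k : ℤ)}))

/-- The ω-limit set of a full solution `φ`. -/
def omegaIn (W : Set X) (φ : ℤ → X) : Set X :=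
  ⋂ k : ℕ, F.InvPartIn W (F.upperC (φ '' {i : ℤ | (k : ℤ) ≤ i}))

/-- `C(A',A)` : the set of cells lying on connections running from `A'` to `A`. -/
def ConnIn (W A' A : Set X) : Set X :=
  {x | ∃ φ : ℤ → X, F.IsSolIn W φ ∧ (∃ i, φ i = F.star x) ∧
        F.alphaIn W φ ⊆ A' ∧ F.omegaIn W φ ⊆ A}

/-- `(A, Rp)` is an attractor-repeller pair in the subcomplex `W`. -/
def ARPairIn (W A Rp : Set X) : Prop :=
  F.AttractorIn W A ∧ F.RepellerIn W Rp ∧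
    A = F.InvPartIn W (W \ Rp) ∧ Rp = F.InvPartIn W (W \ A)

/-- `M` is a Morse decomposition of the subcomplex `W`, with admissible order `le`. -/
def MorseDecompIn (W : Set X) {P : Type*} [Finite P] (le : P → P → Prop)
    (M : P → Set X) : Prop :=
  IsPartialOrder P le ∧
  (∀ r, F.IsoInvIn W (M r)) ∧
  (∀ r r', r ≠ r' → Disjoint (M r) (M r')) ∧
  (∀ φ : ℤ → X, F.IsSolIn W φ →
    ∃ r r', le r r' ∧ F.alphaIn W φ ⊆ M r' ∧ F.omegaIn W φ ⊆ M r) ∧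
  (∀ φ : ℤ → X, F.IsSolIn W φ → ∀ r,
    F.alphaIn W φ ⊆ M r → F.omegaIn W φ ⊆ M r → Set.range φ ⊆ M r)

/-- The Morse set `M(I)` of a family of sets indexed by `I ⊆ P`. -/
def MorseSetIn (W : Set X) {P : Type*} (M : P → Set X) (I : Set P) : Set X :=
  ⋃ r ∈ I, ⋃ r' ∈ I, F.ConnIn W (M r') (M r)

/-- `(P₁, P₂)` is an index pair for the isolated invariant set `S`. -/
def IndexPair (S P₁ P₂ : Set X) : Prop :=
  L.Closed P₁ ∧ L.Closed P₂ ∧ P₂ ⊆ P₁ ∧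
  (∀ x ∈ P₂, ∀ y ∈ F.Pi x, y ∈ P₁ → y ∈ P₂) ∧
  (∀ x ∈ P₁, (∃ y ∈ F.Pi x, y ∉ P₁) → x ∈ P₂) ∧
  S = F.InvPartIn Set.univ (P₁ \ P₂)

/-- `x ⤳_A y` : there is a path of length at least two in `A` from `x★` to `y★`. -/
def PathConn (A : Set X) (x y : X) : Prop :=
  ∃ (a b : ℤ) (φ : ℤ → X), a < b ∧
    (∀ i, a ≤ i → i < b → φ (i + 1) ∈ F.Pi (φ i)) ∧
    (∀ i, a ≤ i → i ≤ b → φ i ∈ A) ∧ φ a = F.star x ∧ φ b = F.star y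

/-- The chain recurrent set. -/
def CR : Set X := {x | F.PathConn Set.univ x x}

/-- `B` is a basic set: an equivalence class of mutual connectedness in `CR`. -/
def IsBasicSet (B : Set X) : Prop :=
  ∃ x ∈ F.CR, B = {y ∈ F.CR | F.PathConn Set.univ x y ∧ F.PathConn Set.univ y x}

/-- The set `E_P` of cells of `P₁` all of whose forward solutions meet `P₂`. -/
def Ep (P₁ P₂ : Set X) : Set X :=
  {x ∈ P₁ | ∀ φ : ℕ → X, φ 0 = x → (∀ i, φ (i + 1) ∈ F.Pi (φ i)) → ∃ i, φ i ∈ P₂}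

/-- The preorder `≤_𝒱` induced by the arrows of the multivector field. -/
def leV : X → X → Prop := Relation.ReflTransGen (fun y x => y ∈ F.Pi x)

/-- The multivector field is acyclic: `≤_𝒱` is a partial order. -/
def Acyclic : Prop := ∀ x y, F.leV x y → F.leV y x → x = y

end MVField

end CMVF

open CMVF

variable {R : Type*} [Ring R] {X : Type*} [Fintype X]

namespace CMVF
namespace Lefschetz

lemma le_dim_lt (L : Lefschetz R X) {y x : X} (h : L.le y x) :
    y = x ∨ L.dim y < L.dim x := by
  induction h with
  | refl => exact Or.inl rfl
  | @tail b c hab hbc ih =>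
    have hd : L.dim c = L.dim b + 1 := L.dim_facet _ _ hbc
    rcases ih with rfl | hlt
    · right; omega
    · right; omega

lemma le_antisymm' (L : Lefschetz R X) {y x : X} (h1 : L.le y x) (h2 : L.le x y) :
    y = x := by
  rcases L.le_dim_lt h1 with rfl | hlt
  · rfl
  · rcases L.le_dim_lt h2 with rfl | hlt'
    · rfl
    · omega

lemma mem_clPt_iff (L : Lefschetz R X) {z x : X} : z ∈ L.clPt x ↔ L.le z x := by
  simp [Lefschetz.clPt, Lefschetz.cls]

lemma mem_opn_iff (L : Lefschetz R X) {z x : X} : z ∈ L.opn x ↔ L.le x z := Iff.rfl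

end Lefschetz

namespace MVField

variable {L : Lefschetz R X} (F : MVField L)

lemma star_spec (x : X) :
    F.star x ∈ F.mclass x ∧ ∀ z ∈ F.mclass x, L.le z (F.star x) :=
  ((F.isMV _ (F.mclass_spec x).1).2).exists.choose_spec

lemma mclass_eq_of_mem {z x : X} (hz : z ∈ F.mclass x) : F.mclass z = F.mclass x :=
  (F.cover z).unique (F.mclass_spec z) ⟨(F.mclass_spec x).1, hz⟩

lemma star_eq_of_mclass_eq {z x : X} (h : F.mclass z = F.mclass x) :
    F.star z = F.star x := by
  refine ((F.isMV _ (F.mclass_spec x).1).2).unique ?_ (F.star_spec x)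
  rw [← h]; exact F.star_spec z

lemma star_eq_of_mem {z x : X} (hz : z ∈ F.mclass x) : F.star z = F.star x :=
  F.star_eq_of_mclass_eq (F.mclass_eq_of_mem hz)

end MVField
end CMVF

/-- Theorem: the map `θ(x) := x★` of a multivector field satisfies (i) `x ∈ cl θ(x)`,
(ii) `θ² = θ`, (iii) for `y ∈ im θ` and `x ∈ θ⁻¹(y)`, `opn x ∩ cl y ⊆ θ⁻¹(y)`; and
conversely any `θ` satisfying (i)-(iii) determines a multivector field
`𝒱_θ = {θ⁻¹(y) | y ∈ im θ}` (its fibres are multivectors partitioning `X`). -/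
theorem theta_characterization (L : Lefschetz R X) :
    (∀ F : MVField L,
      (∀ x, x ∈ L.clPt (F.star x)) ∧
      (∀ x, F.star (F.star x) = F.star x) ∧
      (∀ y ∈ Set.range F.star, ∀ x, F.star x = y →
        L.opn x ∩ L.clPt y ⊆ F.star ⁻¹' {y})) ∧
    (∀ θ : X → X,
      (∀ x, x ∈ L.clPt (θ x)) →
      (∀ x, θ (θ x) = θ x) →
      (∀ y ∈ Set.range θ, ∀ x, θ x = y → L.opn x ∩ L.clPt y ⊆ θ ⁻¹' {y}) →
      ((∀ y ∈ Set.range θ, L.IsMV (θ ⁻¹' {y})) ∧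
        ∀ x : X, ∃! V : Set X, (∃ y ∈ Set.range θ, V = θ ⁻¹' {y}) ∧ x ∈ V)) := by
  constructor
  · intro F
    refine ⟨fun x => ?_, fun x => ?_, ?_⟩
    · exact L.mem_clPt_iff.2 ((F.star_spec x).2 x (F.mclass_spec x).2)
    · exact F.star_eq_of_mem (F.star_spec x).1
    · rintro y ⟨x₀, rfl⟩ x hx z ⟨hxz, hzy⟩
      rw [L.mem_opn_iff] at hxz
      rw [L.mem_clPt_iff] at hzy
      -- show z ∈ F.mclass x
      by_cases hzV : z ∈ F.mclass x
      · simpa using (F.star_eq_of_mem hzV).trans hx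
      · exfalso
        have hyV : F.star x₀ ∈ F.mclass x := by rw [← hx]; exact (F.star_spec x).1
        have hzcl : z ∈ L.cls (F.mclass x) := ⟨F.star x₀, hyV, hzy⟩
        have hzmo : z ∈ L.mo (F.mclass x) := ⟨hzcl, hzV⟩
        have hprop : L.Closed (L.mo (F.mclass x)) :=
          (F.isMV _ (F.mclass_spec x).1).1
        have hxmo : x ∈ L.mo (F.mclass x) := by
          rw [← hprop]; exact ⟨z, hzmo, hxz⟩
        exact hxmo.2 (F.mclass_spec x).2
  · intro θ h1 h2 h3
    have hmem : ∀ {z y : X}, z ∈ θ ⁻¹' {y} ↔ θ z = y := fun {z y} => Iff.rfl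
    constructor
    · rintro y ⟨x₀, rfl⟩
      set y := θ x₀ with hy
      have hyy : θ y = y := h2 x₀
      have hle : ∀ z, θ z = y → L.le z y := by
        intro z hz
        have := L.mem_clPt_iff.1 (h1 z)
        rwa [hz] at this
      constructor
      · -- Proper
        show L.Closed (L.mo (θ ⁻¹' {y}))
        apply Set.Subset.antisymm
        · rintro w ⟨a, ⟨⟨v, hvV, hav⟩, haV⟩, hwa⟩
          have hay : L.le a y := hav.trans (hle v hvV)
          refine ⟨⟨y, hyy, hwa.trans hay⟩, ?_⟩
          intro hwV
          exact haV (h3 y ⟨x₀, rfl⟩ w hwV ⟨L.mem_opn_iff.2 hwa, L.mem_clPt_iff.2 hay⟩)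
        · intro w hw
          exact ⟨w, hw, Relation.ReflTransGen.refl⟩
      · -- unique maximal element
        refine ⟨y, ⟨hyy, fun z hz => hle z hz⟩, ?_⟩
        rintro m ⟨hmV, hmax⟩
        exact L.le_antisymm' (hle m hmV) (hmax y hyy)
    · intro x
      refine ⟨θ ⁻¹' {θ x}, ⟨⟨θ x, ⟨x, rfl⟩, rfl⟩, rfl⟩, ?_⟩
      rintro V ⟨⟨y, hy, rfl⟩, hxV⟩
      rw [show y = θ x from (hmem.1 hxV).symm]
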